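/- arXiv:2504.00171 — 3 statements merged into one kernel-verified Lean document; each statement's English description precedes it below -/
import Mathlib

section
/- If f admits a shift-invariant shadowing map Sh_f : M̃(f,δ) → M, then: (a) the chain recurrent set R(f) equals the closure of the set Per(f) of periodic points of f; (b) the restriction of f to the non-wandering set Ω(f) admits a shift-invariant shadowing map. -/
open Filter Metric Topology

variable {M : Type*}

/-- A `δ`-pseudo-orbit of `f`. -/
def IsPseudoOrbit [MetricSpace M] (f : M → M) (δ : ℝ) (x : ℤ → M) : Prop :=
  ∀ i : ℤ, dist (x (i + 1)) (f (x i)) ≤ δ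

/-- The set `M̃(f,δ)` of `δ`-pseudo-orbits, as a subset of `M^ℤ` (product topology). -/
def PseudoOrbits [MetricSpace M] (f : M → M) (δ : ℝ) : Set (ℤ → M) :=
  {x | IsPseudoOrbit f δ x}

/-- The shift `σ`. -/
def shiftSeq (x : ℤ → M) : ℤ → M := fun i => x (i + 1)

/-- The iterated shift `σ^i`. -/
def shiftIter (i : ℤ) (x : ℤ → M) : ℤ → M := fun j => x (j + i)

/-- The orbit map `orb_f(p)_i = f^i(p)`. -/
def orbitMap (f : Equiv.Perm M) (p : M) : ℤ → M := fun i => (f ^ i) p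

/-- The metric `d̃_s(x,y) = Σ_{i∈ℤ} 2^{-|i|} d(x_i,y_i)` on `M^ℤ`. -/
noncomputable def dtilde [MetricSpace M] (x y : ℤ → M) : ℝ :=
  ∑' i : ℤ, (2 : ℝ) ^ (-|i|) * dist (x i) (y i)

/-- A pseudo-orbit map: a continuous map on `M̃(f,δ)` (δ > 0) sending each true orbit
to its initial point. -/
def IsPseudoOrbitMap [MetricSpace M] (f : Equiv.Perm M) (δ : ℝ) (Po : (ℤ → M) → M) : Prop :=
  0 < δ ∧ ContinuousOn Po (PseudoOrbits (⇑f) δ) ∧ ∀ p : M, Po (orbitMap f p) = p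

/-- `Po` induces shadowing: for all `ε > 0` there is `γ ∈ (0,δ]` such that every
`γ`-pseudo-orbit `x` satisfies `d(f^i(Po x), x_i) ≤ ε` for all `i`. -/
def InducesShadowing [MetricSpace M] (f : Equiv.Perm M) (δ : ℝ) (Po : (ℤ → M) → M) : Prop :=
  ∀ ε > (0:ℝ), ∃ γ : ℝ, 0 < γ ∧ γ ≤ δ ∧ ∀ x ∈ PseudoOrbits (⇑f) γ,
    ∀ i : ℤ, dist ((f ^ i) (Po x)) (x i) ≤ ε

/-- The defining condition of a shadowing map. -/
def ShadowingMapCond [MetricSpace M] (f : Equiv.Perm M) (δ : ℝ) (Sh : (ℤ → M) → M) : Prop :=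
  ∀ ε > (0:ℝ), ∃ γ : ℝ, 0 < γ ∧ γ ≤ δ ∧ ∀ x ∈ PseudoOrbits (⇑f) γ,
    ∀ i : ℤ, dist ((f ^ i) (Sh x)) (Sh (shiftIter i x)) ≤ ε

/-- A shadowing map. -/
def IsShadowingMap [MetricSpace M] (f : Equiv.Perm M) (δ : ℝ) (Sh : (ℤ → M) → M) : Prop :=
  IsPseudoOrbitMap f δ Sh ∧ ShadowingMapCond f δ Sh

/-- The shadowing property. -/
def ShadowingProperty [MetricSpace M] (f : Equiv.Perm M) : Prop :=
  ∀ ε > (0:ℝ), ∃ δ > (0:ℝ), ∀ x ∈ PseudoOrbits (⇑f) δ,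
    ∃ p : M, ∀ i : ℤ, dist ((f ^ i) p) (x i) ≤ ε

/-- `x` is a two-sided limit pseudo-orbit: `d(f(x_i), x_{i+1}) → 0` as `|i| → ∞`. -/
def TwoSidedLimit [MetricSpace M] (f : M → M) (x : ℤ → M) : Prop :=
  Tendsto (fun i : ℤ => dist (f (x i)) (x (i + 1))) cofinite (nhds 0)

/-- The defining condition of an L-shadowing map. -/
def LShadowingMapCond [MetricSpace M] (f : Equiv.Perm M) (δ : ℝ) (Sh : (ℤ → M) → M) : Prop :=
  ∀ ε > (0:ℝ), ∃ γ : ℝ, 0 < γ ∧ γ ≤ δ ∧ ∀ x ∈ PseudoOrbits (⇑f) γ, TwoSidedLimit (⇑f) x →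
    (∀ i : ℤ, dist ((f ^ i) (Sh x)) (x i) ≤ ε) ∧
    Tendsto (fun i : ℤ => dist ((f ^ i) (Sh x)) (x i)) cofinite (nhds 0)

/-- An L-shadowing map. -/
def IsLShadowingMap [MetricSpace M] (f : Equiv.Perm M) (δ : ℝ) (Sh : (ℤ → M) → M) : Prop :=
  IsPseudoOrbitMap f δ Sh ∧ LShadowingMapCond f δ Sh

/-- Shift-invariance of a pseudo-orbit map: `Sh(σ x) = f(Sh x)` on `M̃(f,δ)`. -/
def ShiftInvariant [MetricSpace M] (f : Equiv.Perm M) (δ : ℝ) (Sh : (ℤ → M) → M) : Prop :=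
  ∀ x ∈ PseudoOrbits (⇑f) δ, Sh (shiftSeq x) = f (Sh x)

/-- Self-tuning of a pseudo-orbit map. -/
def HasSelfTuning [MetricSpace M] (f : Equiv.Perm M) (δ : ℝ) (Sh : (ℤ → M) → M) : Prop :=
  ∀ ε > (0:ℝ), ∃ γ > (0:ℝ), ∀ x ∈ PseudoOrbits (⇑f) δ, ∀ i : ℤ,
    dtilde (shiftIter i x) (orbitMap f (x i)) < γ →
    dist ((f ^ i) (Sh x)) (Sh (shiftIter i x)) ≤ ε

/-- The connecting map `con_f(p,q)`. -/
def connMap (f : Equiv.Perm M) (p q : M) : ℤ → M :=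
  fun i => if i < 0 then (f ^ i) p else (f ^ i) q

/-- Local stable set `W_ε^s(p)`. -/
def Ws [MetricSpace M] (f : Equiv.Perm M) (ε : ℝ) (p : M) : Set M :=
  {q | ∀ n : ℕ, dist ((f ^ (n : ℤ)) p) ((f ^ (n : ℤ)) q) ≤ ε}

/-- Local unstable set `W_ε^u(p)`. -/
def Wu [MetricSpace M] (f : Equiv.Perm M) (ε : ℝ) (p : M) : Set M :=
  {q | ∀ n : ℕ, dist ((f ^ (-(n : ℤ))) p) ((f ^ (-(n : ℤ))) q) ≤ ε}

/-- Stable set `W^s(p)`. -/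
def WsLim [MetricSpace M] (f : Equiv.Perm M) (p : M) : Set M :=
  {q | Tendsto (fun n : ℕ => dist ((f ^ (n : ℤ)) p) ((f ^ (n : ℤ)) q)) atTop (nhds 0)}

/-- Unstable set `W^u(p)`. -/
def WuLim [MetricSpace M] (f : Equiv.Perm M) (p : M) : Set M :=
  {q | Tendsto (fun n : ℕ => dist ((f ^ (-(n : ℤ))) p) ((f ^ (-(n : ℤ))) q)) atTop (nhds 0)}

/-- A shadowing bracket on `Δ_δ`. -/
def IsShadowingBracket [MetricSpace M] (f : Equiv.Perm M) (δ : ℝ) (br : M → M → M) : Prop :=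
  0 < δ ∧ ContinuousOn (fun pq : M × M => br pq.1 pq.2) {pq : M × M | dist pq.1 pq.2 ≤ δ} ∧
  (∀ p : M, br p p = p) ∧
  ∀ ε > (0:ℝ), ∃ γ : ℝ, 0 < γ ∧ γ ≤ δ ∧
    ∀ p q : M, dist p q ≤ γ → br p q ∈ Ws f ε q ∩ Wu f ε p

/-- An L-bracket on `Δ_δ`. -/
def IsLBracket [MetricSpace M] (f : Equiv.Perm M) (δ : ℝ) (br : M → M → M) : Prop :=
  0 < δ ∧ ContinuousOn (fun pq : M × M => br pq.1 pq.2) {pq : M × M | dist pq.1 pq.2 ≤ δ} ∧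
  (∀ p : M, br p p = p) ∧
  ∀ ε > (0:ℝ), ∃ γ : ℝ, 0 < γ ∧ γ ≤ δ ∧
    ∀ p q : M, dist p q ≤ γ →
      br p q ∈ (Ws f ε q ∩ WsLim f q) ∩ (Wu f ε p ∩ WuLim f p)

/-- cw-expansivity. -/
def CWExpansive [MetricSpace M] (f : Equiv.Perm M) : Prop :=
  ∃ ξ > (0:ℝ), ∀ C : Set M, IsConnected C →
    (∀ i : ℤ, Metric.diam ((f ^ i) '' C) ≤ ξ) → C.Subsingleton

/-- Expansivity. -/
def Expansive [MetricSpace M] (f : Equiv.Perm M) : Prop :=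
  ∃ ξ > (0:ℝ), ∀ p q : M, p ≠ q → ∃ i : ℤ, ξ < dist ((f ^ i) p) ((f ^ i) q)

/-- The chain recurrent set `R(f)`. -/
def ChainRecurrent {M : Type*} [MetricSpace M] (f : M → M) : Set M :=
  {p | ∀ α > (0:ℝ), ∃ k : ℕ, 1 ≤ k ∧ ∃ z : ℕ → M, z 0 = p ∧ z k = p ∧
    ∀ j < k, dist (z (j + 1)) (f (z j)) ≤ α}

/-- The set of periodic points of `f`. -/
def PerPts {M : Type*} (f : Equiv.Perm M) : Set M :=
  {p | ∃ n : ℕ, 1 ≤ n ∧ (f ^ n) p = p}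

/-- The non-wandering set `Ω(f)`. -/
def NonWandering {M : Type*} [TopologicalSpace M] (f : Equiv.Perm M) : Set M :=
  {p | ∀ U ∈ nhds p, ∃ n : ℕ, 1 ≤ n ∧ ((f ^ n) '' U ∩ U).Nonempty}


/-! ### Auxiliary lemmas -/

section AuxShadow

open scoped Uniformity

variable [MetricSpace M]

set_option linter.unusedSectionVars false

lemma perm_pow_succ_apply' (f : Equiv.Perm M) (n : ℕ) (x : M) :
    (f ^ (n + 1)) x = f ((f ^ n) x) := by
  rw [pow_succ']; rfl

lemma perm_zpow_one_add_apply' (f : Equiv.Perm M) (a : ℤ) (x : M) :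
    (f ^ (1 + a)) x = f ((f ^ a) x) := by
  rw [zpow_add]; rfl

lemma perm_zpow_neg_one_add_apply' (f : Equiv.Perm M) (a : ℤ) (x : M) :
    (f ^ (-1 + a)) x = f.symm ((f ^ a) x) := by
  rw [zpow_add, zpow_neg_one]
  rfl

lemma IsPseudoOrbit.mono' {f : M → M} {γ δ : ℝ} (h : γ ≤ δ) {x : ℤ → M}
    (hx : IsPseudoOrbit f γ x) : IsPseudoOrbit f δ x := fun i => (hx i).trans h

lemma shiftIter_mem' (f : M → M) (δ : ℝ) (n : ℤ) {x : ℤ → M} (hx : x ∈ PseudoOrbits f δ) :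
    shiftIter n x ∈ PseudoOrbits f δ := by
  intro i; have := hx (i + n); simpa [shiftIter, add_right_comm] using this

lemma shiftIter_zero' (x : ℤ → M) : shiftIter 0 x = x := by funext j; simp [shiftIter]

lemma shiftSeq_shiftIter' (n : ℤ) (x : ℤ → M) :
    shiftSeq (shiftIter n x) = shiftIter (n + 1) x := by
  funext j; show x (j + 1 + n) = x (j + (n + 1)); ring_nf

lemma orbitMap_mem' (f : Equiv.Perm M) {δ : ℝ} (hδ : 0 ≤ δ) (p : M) :
    orbitMap f p ∈ PseudoOrbits (⇑f) δ := by
  intro i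
  have : (f ^ (i + 1)) p = f ((f ^ i) p) := by
    rw [add_comm, perm_zpow_one_add_apply']
  simp [orbitMap, this, hδ]

/-- Iterated shift-invariance. -/
lemma sh_iter' {f : Equiv.Perm M} {δ : ℝ} {Sh : (ℤ → M) → M}
    (hsi : ∀ x ∈ PseudoOrbits (⇑f) δ, Sh (shiftSeq x) = f (Sh x))
    {x : ℤ → M} (hx : x ∈ PseudoOrbits (⇑f) δ) (n : ℤ) :
    Sh (shiftIter n x) = (f ^ n) (Sh x) := by
  induction n using Int.induction_on with
  | zero => simp [shiftIter_zero']
  | succ k ih =>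
    have hmem := shiftIter_mem' (⇑f) δ (k : ℤ) hx
    have := hsi _ hmem
    rw [shiftSeq_shiftIter'] at this
    rw [this, ih]
    have : ((k : ℤ) + 1) = 1 + (k : ℤ) := by ring
    rw [this, perm_zpow_one_add_apply']
  | pred k ih =>
    have hmem := shiftIter_mem' (⇑f) δ (-(k : ℤ) - 1) hx
    have h1 := hsi _ hmem
    rw [shiftSeq_shiftIter'] at h1
    have h2 : (-(k : ℤ) - 1 + 1) = -(k : ℤ) := by ring
    rw [h2, ih] at h1
    have h3 : Sh (shiftIter (-(k : ℤ) - 1) x) = f.symm ((f ^ (-(k : ℤ))) (Sh x)) := by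
      apply f.injective; rw [← h1, Equiv.apply_symm_apply]
    rw [h3]
    have h4 : (f ^ (-(k : ℤ) - 1)) (Sh x) = f.symm ((f ^ (-(k : ℤ))) (Sh x)) := by
      have he : (-(k : ℤ)) = 1 + (-(k:ℤ) - 1) := by ring
      have h5 := perm_zpow_one_add_apply' f (-(k:ℤ) - 1) (Sh x)
      rw [← he] at h5
      apply f.injective
      rw [← h5, Equiv.apply_symm_apply]
    rw [h4]

/-- A finite `α`-chain from `p` to `q`. -/
def ChainFrom (f : M → M) (α : ℝ) (p q : M) : Prop :=
  ∃ k : ℕ, 1 ≤ k ∧ ∃ z : ℕ → M, z 0 = p ∧ z k = q ∧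
    ∀ j < k, dist (z (j + 1)) (f (z j)) ≤ α

lemma ChainFrom.trans {f : M → M} {α : ℝ} {p q r : M}
    (h1 : ChainFrom f α p q) (h2 : ChainFrom f α q r) : ChainFrom f α p r := by
  obtain ⟨k1, hk1, z, hz0, hzk, hz⟩ := h1
  obtain ⟨k2, hk2, w, hw0, hwk, hw⟩ := h2
  refine ⟨k1 + k2, by omega, fun j => if j ≤ k1 then z j else w (j - k1), by simp [hz0], ?_, ?_⟩
  · have : ¬ (k1 + k2 ≤ k1) := by omega
    simp only [this, if_neg]
    simpa using hwk
  · intro j hj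
    by_cases hle : j < k1
    · have h1' : j ≤ k1 := by omega
      have h2' : j + 1 ≤ k1 := by omega
      simpa [h1', h2'] using hz j hle
    · have h1' : j ≤ k1 ↔ j = k1 := by omega
      have h2' : ¬ (j + 1 ≤ k1) := by omega
      have hwj : (if j ≤ k1 then z j else w (j - k1)) = w (j - k1) := by
        by_cases he : j = k1
        · subst he; simp [hzk, ← hw0]
        · have : ¬ (j ≤ k1) := by omega
          simp [this]
      have := hw (j - k1) (by omega)
      have harg : j - k1 + 1 = j + 1 - k1 := by omega
      simp only []
      rw [if_neg h2', hwj, ← harg]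
      exact this

/-- A single jump chain. -/
lemma chainFrom_single {f : M → M} {α : ℝ} {p q : M} (h : dist q (f p) ≤ α) :
    ChainFrom f α p q := by
  refine ⟨1, le_refl _, fun j => if j = 0 then p else q, by simp, by simp, ?_⟩
  intro j hj
  interval_cases j
  simpa using h

variable [CompactSpace M]

lemma uc_modulus' {g : M → M} (hg : Continuous g) :
    ∀ ε > (0:ℝ), ∃ θ > (0:ℝ), ∀ a b : M, dist a b < θ → dist (g a) (g b) < ε := by
  intro ε hε
  have := CompactSpace.uniformContinuous_of_continuous hg
  rw [Metric.uniformContinuous_iff] at this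
  exact this ε hε

lemma perPts_subset_nonWandering' (f : Equiv.Perm M) :
    PerPts f ⊆ NonWandering f := by
  rintro p ⟨n, hn, hp⟩ U hU
  exact ⟨n, hn, p, ⟨p, mem_of_mem_nhds hU, hp⟩, mem_of_mem_nhds hU⟩

lemma isClosed_nonWandering' (f : Equiv.Perm M) : IsClosed (NonWandering f) := by
  rw [← isOpen_compl_iff, isOpen_iff_mem_nhds]
  intro p hp
  simp only [Set.mem_compl_iff, NonWandering, Set.mem_setOf_eq, not_forall] at hp
  obtain ⟨U, hU, hno⟩ := hp
  push_neg at hno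
  refine mem_of_superset (interior_mem_nhds.2 hU) ?_
  intro q hq
  simp only [Set.mem_compl_iff, NonWandering, Set.mem_setOf_eq, not_forall]
  refine ⟨U, mem_nhds_iff.2 ⟨interior U, interior_subset, isOpen_interior, hq⟩, ?_⟩
  push_neg
  exact hno

lemma nw_return' {f : Equiv.Perm M} {p : M} (hp : p ∈ NonWandering f) :
    ∀ η > (0:ℝ), ∃ n : ℕ, 1 ≤ n ∧ ∃ w : M, dist w p < η ∧ dist ((f ^ n) w) p < η := by
  intro η hη
  obtain ⟨n, hn, y, hy1, hy2⟩ := hp (Metric.ball p η) (Metric.ball_mem_nhds p hη)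
  obtain ⟨w, hw, rfl⟩ := hy1
  exact ⟨n, hn, w, by simpa [Metric.mem_ball] using hw, by simpa [Metric.mem_ball] using hy2⟩

/-- Key chain construction: from a point `ρ`-close to `f p` (for `p` nonwandering)
there is a `β`-chain back to `p`. -/
lemma chain_back (f : Equiv.Perm M) (hf : Continuous (⇑f)) {β : ℝ} (hβ : 0 < β) :
    ∃ ρ : ℝ, 0 < ρ ∧ ρ ≤ β ∧ ∀ p q : M, p ∈ NonWandering f → dist q (f p) ≤ ρ →
      ChainFrom (⇑f) β q p := by
  obtain ⟨θA', hθA', hA'⟩ := uc_modulus' hf (β/4) (by linarith)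
  set θA := min θA' (β/2) with hθAdef
  have hθA : 0 < θA := lt_min hθA' (by linarith)
  have hA : ∀ a b : M, dist a b < θA → dist (f a) (f b) < β/4 :=
    fun a b h => hA' a b (h.trans_le (min_le_left _ _))
  obtain ⟨θB, hθB, hB⟩ := uc_modulus' hf (min θA (β/4)) (lt_min hθA (by linarith))
  obtain ⟨θC', hθC', hC'⟩ := uc_modulus' hf (θA/2) (by linarith)
  set θC := min θC' (θA/2) with hθCdef
  have hθC : 0 < θC := lt_min hθC' (by linarith)
  have hC : ∀ a b : M, dist a b < θC → dist (f a) (f b) < θA/2 :=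
    fun a b h => hC' a b (h.trans_le (min_le_left _ _))
  set η := min θB θC with hηdef
  have hη : 0 < η := lt_min hθB hθC
  have hηθB : η ≤ θB := min_le_left _ _
  have hηθC : η ≤ θC := min_le_right _ _
  have hηθA : η ≤ θA/2 := hηθC.trans (min_le_right _ _)
  refine ⟨θA/2, by linarith, by
      have : θA ≤ β/2 := min_le_right _ _
      linarith, ?_⟩
  intro p q hp hq
  obtain ⟨n, hn, w, hw, hfw⟩ := nw_return' hp η hη
  have hfq : dist (f q) (f (f p)) < β/4 := hA q (f p) (by
    have : θA/2 < θA := by linarith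
    linarith)
  have h1 : dist (f w) (f p) < min θA (β/4) := hB w p (hw.trans_le hηθB)
  have h2 : dist (f (f w)) (f (f p)) < β/4 := hA _ _ (h1.trans_le (min_le_left _ _))
  rcases Nat.lt_or_ge n 3 with hn3 | hn3
  · have hsingle : dist p (f q) ≤ β := by
      interval_cases n
      · have hfw1 : dist (f w) p < η := by simpa [pow_one] using hfw
        have hwp : dist (f w) (f p) < θA/2 := hC w p (hw.trans_le hηθC)
        have hpfp : dist p (f p) < θA := by
          calc dist p (f p) ≤ dist p (f w) + dist (f w) (f p) := dist_triangle _ _ _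
          _ < η + θA/2 := by
              have := hfw1; rw [dist_comm] at this; linarith
          _ ≤ θA := by linarith
        have h3 : dist (f p) (f (f p)) < β/4 := hA _ _ hpfp
        have hfq2 : dist (f (f p)) (f q) = dist (f q) (f (f p)) := dist_comm _ _
        have htri := dist_triangle4 p (f p) (f (f p)) (f q)
        have hθA2 : θA ≤ β/2 := min_le_right _ _
        rw [hfq2] at htri
        linarith [hpfp.le, h3.le, hfq.le]
      · have hfw2 : dist ((f ^ 2) w) p < η := hfw
        have h2' : dist ((f ^ 2) w) ((f ^ 2) p) < β/4 := by
          have e1 : (f ^ 2) w = f (f w) := by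
            rw [show (2:ℕ) = 1 + 1 from rfl, perm_pow_succ_apply', pow_one]
          have e2 : (f ^ 2) p = f (f p) := by
            rw [show (2:ℕ) = 1 + 1 from rfl, perm_pow_succ_apply', pow_one]
          rw [e1, e2]; exact h2
        have e2 : (f ^ 2) p = f (f p) := by
          rw [show (2:ℕ) = 1 + 1 from rfl, perm_pow_succ_apply', pow_one]
        have htri := dist_triangle4 p ((f ^ 2) w) ((f ^ 2) p) (f q)
        have ha : dist p ((f ^ 2) w) ≤ η := by rw [dist_comm]; exact hfw2.le
        have hb : dist ((f ^ 2) p) (f q) ≤ β/4 := by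
          rw [e2, dist_comm]; exact hfq.le
        have h4 : θA ≤ β/2 := min_le_right _ _
        linarith [h2'.le]
    exact ⟨1, le_refl _, fun j => if j = 0 then q else p, by simp, by simp, by
      intro j hj; interval_cases j; simpa using hsingle⟩
  · refine ⟨n - 1, by omega, fun j => if j = 0 then q else if j < n - 1 then (f ^ (j+1)) w else p,
      by simp, by
        have h1' : ¬ (n - 1 = 0) := by omega
        have h2' : ¬ (n - 1 < n - 1) := by omega
        simp [h1', h2'], ?_⟩
    intro j hj
    simp only []
    rcases Nat.eq_zero_or_pos j with rfl | hj0
    · have e1 : (1:ℕ) ≠ 0 := by omega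
      have e2 : (1:ℕ) < n - 1 := by omega
      rw [if_pos rfl, if_neg e1, if_pos e2]
      have e3 : (f ^ (1+1)) w = f (f w) := by rw [perm_pow_succ_apply', pow_one]
      rw [e3]
      calc dist (f (f w)) (f q) ≤ dist (f (f w)) (f (f p)) + dist (f (f p)) (f q) :=
            dist_triangle _ _ _
      _ ≤ β/4 + β/4 := by
          have hfq2 : dist (f (f p)) (f q) = dist (f q) (f (f p)) := dist_comm _ _
          rw [hfq2]
          linarith [h2.le, hfq.le]
      _ ≤ β := by linarith
    · have hjne : j ≠ 0 := by omega
      rcases Nat.lt_or_ge (j+1) (n-1) with hlt | hge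
      · have hjlt : j < n - 1 := by omega
        have e : (j+1) ≠ 0 := by omega
        rw [if_neg e, if_pos hlt, if_neg hjne, if_pos hjlt, perm_pow_succ_apply']
        simp only [dist_self]
        linarith
      · have hj1 : j + 1 = n - 1 := by omega
        have e : (j+1) ≠ 0 := by omega
        have e2 : ¬ (j + 1 < n - 1) := by omega
        have hjlt : j < n - 1 := hj
        rw [if_neg e, if_neg e2, if_neg hjne, if_pos hjlt]
        have e4 : f ((f ^ (j+1)) w) = (f ^ n) w := by
          rw [← perm_pow_succ_apply', show (j+1)+1 = n from by omega]
        rw [e4, dist_comm]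
        have : η ≤ β := by
          have h4 : θA ≤ β/2 := min_le_right _ _
          linarith
        linarith [hfw]

lemma isClosed_pseudoOrbits (f : M → M) (hf : Continuous f) (δ : ℝ) :
    IsClosed (PseudoOrbits f δ) := by
  have : PseudoOrbits f δ = ⋂ i : ℤ, {x : ℤ → M | dist (x (i+1)) (f (x i)) ≤ δ} := by
    ext x; simp [PseudoOrbits, IsPseudoOrbit, Set.mem_iInter]
  rw [this]
  refine isClosed_iInter fun i => isClosed_le ?_ continuous_const
  exact (continuous_apply (i+1)).dist (hf.comp (continuous_apply i))

/-- Uniform continuity of `Sh` on the compact set of `δ`-pseudo-orbits, in window form. -/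
lemma sh_window_cont (f : Equiv.Perm M) (hf : Continuous (⇑f)) {δ : ℝ}
    {Sh : (ℤ → M) → M} (hcont : ContinuousOn Sh (PseudoOrbits (⇑f) δ)) :
    ∀ ε > (0:ℝ), ∃ (N : ℕ) (η : ℝ), 0 < η ∧ ∀ x y : ℤ → M,
      x ∈ PseudoOrbits (⇑f) δ → y ∈ PseudoOrbits (⇑f) δ →
      (∀ i : ℤ, |i| ≤ (N:ℤ) → dist (x i) (y i) < η) → dist (Sh x) (Sh y) < ε := by
  intro ε hε
  have hK : IsCompact (PseudoOrbits (⇑f) δ) :=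
    (isClosed_pseudoOrbits (⇑f) hf δ).isCompact
  have hUC : UniformContinuousOn Sh (PseudoOrbits (⇑f) δ) :=
    hK.uniformContinuousOn_of_continuous hcont
  have hE : {p : M × M | dist p.1 p.2 < ε} ∈ 𝓤 M := Metric.dist_mem_uniformity hε
  have hW := hUC hE
  rw [Filter.mem_map, Filter.mem_inf_principal, Pi.uniformity, Filter.mem_iInf] at hW
  obtain ⟨I, hIfin, V, hV, hWeq⟩ := hW
  have hmod : ∀ i : I, ∃ η : ℝ, 0 < η ∧
      ∀ xy : (ℤ → M) × (ℤ → M), dist (xy.1 i.1) (xy.2 i.1) < η → xy ∈ V i := by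
    intro i
    have := hV i
    rw [Filter.mem_comap] at this
    obtain ⟨U, hU, hsub⟩ := this
    rw [Metric.mem_uniformity_dist] at hU
    obtain ⟨η, hη, hUd⟩ := hU
    exact ⟨η, hη, fun xy hd => hsub (hUd hd)⟩
  choose ηf hηf hVi using hmod
  have hmin : ∃ η0 : ℝ, 0 < η0 ∧ ∀ i : I, η0 ≤ ηf i := by
    haveI : Fintype I := hIfin.fintype
    rcases isEmpty_or_nonempty I with hI | hI
    · exact ⟨1, one_pos, fun i => (IsEmpty.false i).elim⟩
    · refine ⟨Finset.univ.inf' Finset.univ_nonempty ηf, ?_, ?_⟩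
      · rw [Finset.lt_inf'_iff]
        exact fun i _ => hηf i
      · exact fun i => Finset.inf'_le _ (Finset.mem_univ i)
  obtain ⟨η0, hη0, hη0le⟩ := hmin
  have hbd : ∃ N : ℕ, ∀ i : I, |i.1| ≤ (N:ℤ) := by
    have hfin : (Set.image (fun i : ℤ => i.natAbs) I).Finite := hIfin.image _
    obtain ⟨N, hN⟩ := hfin.bddAbove
    refine ⟨N, fun i => ?_⟩
    have h1 : i.1.natAbs ≤ N := hN ⟨i.1, i.2, rfl⟩
    rw [Int.abs_eq_natAbs]
    exact_mod_cast h1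
  obtain ⟨N, hN⟩ := hbd
  refine ⟨N, η0, hη0, fun x y hx hy hwin => ?_⟩
  have hmem : (x, y) ∈ ⋂ i, V i := by
    rw [Set.mem_iInter]
    intro i
    exact hVi i (x, y) ((hwin i.1 (hN i)).trans_le (hη0le i))
  rw [← hWeq] at hmem
  exact hmem ⟨hx, hy⟩

/-- Pseudo-orbits with small jumps stay near the true orbit on a finite window. -/
lemma window_lemma (f : Equiv.Perm M) (hf : Continuous (⇑f)) (hf' : Continuous (⇑f.symm))
    {δ : ℝ} (hδ : 0 < δ) :
    ∀ (N : ℕ) (η : ℝ), 0 < η → ∃ γ : ℝ, 0 < γ ∧ γ ≤ δ ∧ ∀ x : ℤ → M,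
      IsPseudoOrbit (⇑f) γ x → ∀ i : ℤ, |i| ≤ (N:ℤ) → dist (x i) ((f ^ i) (x 0)) ≤ η := by
  intro N
  induction N with
  | zero =>
    intro η hη
    refine ⟨δ, hδ, le_refl _, fun x hx i hi => ?_⟩
    have : i = 0 := by
      rw [abs_le] at hi; omega
    subst this
    simp [hη.le]
  | succ N ih =>
    intro η hη
    obtain ⟨θ1, hθ1, h1⟩ := uc_modulus' hf (η/2) (by linarith)
    obtain ⟨θ2, hθ2, h2⟩ := uc_modulus' hf' (η/2) (by linarith)
    set η₁ := (min (min θ1 θ2) η) / 2 with hη₁def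
    have hη₁ : 0 < η₁ := by
      apply div_pos _ two_pos
      exact lt_min (lt_min hθ1 hθ2) hη
    obtain ⟨γ₁, hγ₁, hγ₁δ, hIH⟩ := ih η₁ hη₁
    refine ⟨min γ₁ (min (η/2) (θ2/2)), lt_min hγ₁ (lt_min (by linarith) (by linarith)),
      (min_le_left _ _).trans hγ₁δ, ?_⟩
    intro x hx i hi
    have hxγ₁ : IsPseudoOrbit (⇑f) γ₁ x := hx.mono' (min_le_left _ _)
    have hγη : ∀ j : ℤ, dist (x (j + 1)) (f (x j)) ≤ η/2 :=
      fun j => (hx j).trans ((min_le_right _ _).trans (min_le_left _ _))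
    have hγθ2 : ∀ j : ℤ, dist (x (j + 1)) (f (x j)) < θ2 :=
      fun j => lt_of_le_of_lt ((hx j).trans ((min_le_right _ _).trans (min_le_right _ _)))
        (by linarith)
    have hη₁θ1 : η₁ < θ1 := by
      have : min (min θ1 θ2) η ≤ θ1 := (min_le_left _ _).trans (min_le_left _ _)
      linarith
    have hη₁θ2 : η₁ < θ2 := by
      have : min (min θ1 θ2) η ≤ θ2 := (min_le_left _ _).trans (min_le_right _ _)
      linarith
    have hη₁η : η₁ ≤ η := by
      have : min (min θ1 θ2) η ≤ η := min_le_right _ _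
      linarith
    rw [abs_le] at hi
    rcases lt_trichotomy i ((N:ℤ)+1) with hlt | heq | hgt
    · rcases lt_trichotomy i (-((N:ℤ)+1)) with hc1 | hc2 | hc3
      · omega
      · subst hc2
        have key := hγθ2 (-((N:ℤ)+1))
        have e0 : (-((N:ℤ)+1) + 1) = -(N:ℤ) := by ring
        rw [e0] at key
        have hstep : dist (f.symm (x (-(N:ℤ)))) (x (-((N:ℤ)+1))) < η/2 := by
          have := h2 _ _ key
          rwa [Equiv.symm_apply_apply] at this
        have hIHn : dist (x (-(N:ℤ))) ((f ^ (-(N:ℤ))) (x 0)) ≤ η₁ := by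
          apply hIH x hxγ₁
          rw [abs_le]; omega
        have hsym : dist (f.symm (x (-(N:ℤ)))) (f.symm ((f ^ (-(N:ℤ))) (x 0))) < η/2 :=
          h2 _ _ (lt_of_le_of_lt hIHn hη₁θ2)
        have e1 : (f ^ (-((N:ℤ)+1))) (x 0) = f.symm ((f ^ (-(N:ℤ))) (x 0)) := by
          rw [show (-((N:ℤ)+1)) = -1 + (-(N:ℤ)) from by ring, perm_zpow_neg_one_add_apply']
        rw [e1]
        calc dist (x (-((N:ℤ)+1))) (f.symm ((f ^ (-(N:ℤ))) (x 0)))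
            ≤ dist (x (-((N:ℤ)+1))) (f.symm (x (-(N:ℤ))))
              + dist (f.symm (x (-(N:ℤ)))) (f.symm ((f ^ (-(N:ℤ))) (x 0))) := dist_triangle _ _ _
        _ ≤ η := by
            rw [dist_comm] at hstep
            linarith
      · have : |i| ≤ (N:ℤ) := by rw [abs_le]; omega
        exact (hIH x hxγ₁ i this).trans hη₁η
    · subst heq
      have key := hγη (N:ℤ)
      have hIHn : dist (x (N:ℤ)) ((f ^ (N:ℤ)) (x 0)) ≤ η₁ := by
        apply hIH x hxγ₁
        rw [abs_le]; omega
      have hstep : dist (f (x (N:ℤ))) (f ((f ^ (N:ℤ)) (x 0))) < η/2 :=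
        h1 _ _ (lt_of_le_of_lt hIHn hη₁θ1)
      have e1 : (f ^ ((N:ℤ)+1)) (x 0) = f ((f ^ (N:ℤ)) (x 0)) := by
        rw [show ((N:ℤ)+1) = 1 + (N:ℤ) from by ring, perm_zpow_one_add_apply']
      rw [e1]
      calc dist (x ((N:ℤ)+1)) (f ((f ^ (N:ℤ)) (x 0)))
          ≤ dist (x ((N:ℤ)+1)) (f (x (N:ℤ))) + dist (f (x (N:ℤ))) (f ((f ^ (N:ℤ)) (x 0))) :=
            dist_triangle _ _ _
      _ ≤ η := by linarith
    · omega

/-- Periodization of a finite loop into a bi-infinite periodic pseudo-orbit. -/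
lemma periodize (f : M → M) (β : ℝ) (m : ℕ) (hm : 1 ≤ m) (F : ℕ → M)
    (hwrap : F m = F 0) (hjump : ∀ j < m, dist (F (j + 1)) (f (F j)) ≤ β) (a : ℤ) :
    IsPseudoOrbit f β (fun i => F (((i + a) % (m:ℤ)).toNat)) ∧
    shiftIter (m:ℤ) (fun i => F (((i + a) % (m:ℤ)).toNat)) =
      (fun i => F (((i + a) % (m:ℤ)).toNat)) ∧
    (∀ i : ℤ, 0 ≤ i + a → i + a < (m:ℤ) → F (((i + a) % (m:ℤ)).toNat) = F ((i + a).toNat)) := by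
  have hm0 : (0:ℤ) < (m:ℤ) := by exact_mod_cast hm
  have hmne : (m:ℤ) ≠ 0 := ne_of_gt hm0
  refine ⟨?_, ?_, ?_⟩
  · intro i
    have hr0 : 0 ≤ (i + a) % (m:ℤ) := Int.emod_nonneg _ hmne
    have hrm : (i + a) % (m:ℤ) < (m:ℤ) := Int.emod_lt_of_pos _ hm0
    set r := ((i + a) % (m:ℤ)).toNat with hrdef
    have hcast : (r:ℤ) = (i + a) % (m:ℤ) := Int.toNat_of_nonneg hr0
    have hrm' : r < m := by omega
    have hshift : (i + 1 + a) % (m:ℤ) = ((r:ℤ) + 1) % (m:ℤ) := by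
      rw [hcast]
      rw [show i + 1 + a = (i + a) + 1 from by ring]
      rw [Int.emod_add_emod]
    rcases Nat.lt_or_ge (r + 1) m with hlt | hge
    · have h5 : ((r:ℤ) + 1) % (m:ℤ) = (r:ℤ) + 1 := by
        apply Int.emod_eq_of_lt (by positivity)
        exact_mod_cast hlt
      have he : ((i + 1 + a) % (m:ℤ)).toNat = r + 1 := by
        rw [hshift, h5]
        omega
      simp only [he]
      exact hjump r hrm'
    · have hreq : r + 1 = m := by omega
      have h5 : ((r:ℤ) + 1) % (m:ℤ) = 0 := by
        rw [show (r:ℤ) + 1 = (m:ℤ) from by exact_mod_cast hreq]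
        simp
      have he : ((i + 1 + a) % (m:ℤ)).toNat = 0 := by rw [hshift, h5]; rfl
      simp only [he]
      have h6 : F 0 = F (r + 1) := by rw [hreq, hwrap]
      rw [h6]
      exact hjump r hrm'
  · funext j
    show F (((j + (m:ℤ) + a) % (m:ℤ)).toNat) = F (((j + a) % (m:ℤ)).toNat)
    rw [show j + (m:ℤ) + a = (j + a) + (m:ℤ) * 1 from by ring, Int.add_mul_emod_self_left]
  · intro i h0 h1
    rw [Int.emod_eq_of_lt h0 h1]

lemma perPts_subset_chainRecurrent (f : Equiv.Perm M) :
    PerPts f ⊆ ChainRecurrent (⇑f) := by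
  rintro p ⟨n, hn, hp⟩ α hα
  refine ⟨n, hn, fun j => (f ^ j) p, by simp, hp, ?_⟩
  intro j hj
  have : (f ^ (j + 1)) p = f ((f ^ j) p) := by rw [pow_succ']; rfl
  simp [this, hα.le]

lemma isClosed_chainRecurrent (f : Equiv.Perm M) (hf : Continuous (⇑f)) :
    IsClosed (ChainRecurrent (⇑f)) := by
  rw [← closure_subset_iff_isClosed]
  intro p hp
  intro α hα
  have huc := CompactSpace.uniformContinuous_of_continuous hf
  rw [Metric.uniformContinuous_iff] at huc
  obtain ⟨θ, hθ, hθd⟩ := huc (α/3) (by linarith)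
  rw [Metric.mem_closure_iff] at hp
  obtain ⟨p', hp', hpp'⟩ := hp (min θ (α/3)) (lt_min hθ (by linarith))
  obtain ⟨k, hk, z, hz0, hzk, hz⟩ := hp' (α/3) (by linarith)
  have hppθ : dist p' p < θ := by rw [dist_comm]; exact hpp'.trans_le (min_le_left _ _)
  have hppα : dist p p' < α/3 := hpp'.trans_le (min_le_right _ _)
  have hfp : dist (f p') (f p) < α/3 := hθd hppθ
  refine ⟨k, hk, fun j => if j = 0 ∨ j = k then p else z j, by simp, by simp, ?_⟩
  intro j hj
  simp only []
  rcases Nat.eq_zero_or_pos j with rfl | hj0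
  · have e0 : (0 = 0 ∨ 0 = k) := Or.inl rfl
    rw [if_pos e0]
    by_cases h1k : 1 = k
    · have e1 : (1 = 0 ∨ 1 = k) := Or.inr h1k
      rw [if_pos e1]
      have hzz := hz 0 hj
      rw [hz0, show z (0+1) = z k from by rw [← h1k], hzk] at hzz
      calc dist p (f p) ≤ dist p p' + dist p' (f p') + dist (f p') (f p) :=
            dist_triangle4 _ _ _ _
      _ ≤ α := by linarith
    · have e1 : ¬ (1 = 0 ∨ 1 = k) := by push_neg; exact ⟨one_ne_zero, h1k⟩
      rw [if_neg e1]
      have hzz := hz 0 hj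
      rw [hz0] at hzz
      calc dist (z 1) (f p) ≤ dist (z 1) (f p') + dist (f p') (f p) := dist_triangle _ _ _
      _ ≤ α := by linarith
  · have hjne : ¬ (j = 0 ∨ j = k) := by omega
    rw [if_neg hjne]
    by_cases hjk : j + 1 = k
    · have e1 : (j + 1 = 0 ∨ j + 1 = k) := Or.inr hjk
      rw [if_pos e1]
      have hzz := hz j hj
      rw [show z (j+1) = p' from by rw [hjk, hzk]] at hzz
      calc dist p (f (z j)) ≤ dist p p' + dist p' (f (z j)) := dist_triangle _ _ _
      _ ≤ α := by linarith
    · have e1 : ¬ (j + 1 = 0 ∨ j + 1 = k) := by omega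
      rw [if_neg e1]
      exact (hz j hj).trans (by linarith)

end AuxShadow


/-- Proposition 6.12: if `f` admits a shift-invariant shadowing map
`Sh_f : M̃(f,δ) → M` then (a) `R(f) = clos(Per(f))`, and (b) the restriction of `f` to
the non-wandering set `Ω(f)` admits a shift-invariant shadowing map. -/
theorem stmt14 {M : Type*} [MetricSpace M] [CompactSpace M]
    (f : Equiv.Perm M) (hf : Continuous (⇑f)) (hf' : Continuous (⇑f.symm))
    (δ : ℝ) (Sh : (ℤ → M) → M)
    (hSh : IsShadowingMap f δ Sh) (hsi : ShiftInvariant f δ Sh) :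
    ChainRecurrent (⇑f) = closure (PerPts f) ∧
    (∃ δ' > (0:ℝ), ∃ Sh' : (ℤ → M) → M,
      ContinuousOn Sh' {x : ℤ → M | IsPseudoOrbit (⇑f) δ' x ∧ ∀ i : ℤ, x i ∈ NonWandering f} ∧
      (∀ x : ℤ → M, IsPseudoOrbit (⇑f) δ' x → (∀ i : ℤ, x i ∈ NonWandering f) →
        Sh' x ∈ NonWandering f) ∧
      (∀ p ∈ NonWandering f, Sh' (orbitMap f p) = p) ∧
      (∀ x : ℤ → M, IsPseudoOrbit (⇑f) δ' x → (∀ i : ℤ, x i ∈ NonWandering f) →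
        Sh' (shiftSeq x) = f (Sh' x)) ∧
      (∀ ε > (0:ℝ), ∃ γ : ℝ, 0 < γ ∧ γ ≤ δ' ∧
        ∀ x : ℤ → M, IsPseudoOrbit (⇑f) γ x → (∀ i : ℤ, x i ∈ NonWandering f) →
          ∀ i : ℤ, dist ((f ^ i) (Sh' x)) (Sh' (shiftIter i x)) ≤ ε)) := by
  obtain ⟨⟨hδpos, hcont, horb⟩, _hshcond⟩ := hSh
  -- the key uniform lemma: Sh x is close to x 0 for pseudo-orbits with small jumps
  have hKUL : ∀ ε > (0:ℝ), ∃ γ : ℝ, 0 < γ ∧ γ ≤ δ ∧ ∀ x : ℤ → M,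
      IsPseudoOrbit (⇑f) γ x → dist (Sh x) (x 0) ≤ ε := by
    intro ε hε
    obtain ⟨N, η, hη, hwin⟩ := sh_window_cont f hf hcont ε hε
    obtain ⟨γ, hγ, hγδ, hWL⟩ := window_lemma f hf hf' hδpos N (η/2) (by linarith)
    refine ⟨γ, hγ, hγδ, fun x hx => ?_⟩
    have hxδ : x ∈ PseudoOrbits (⇑f) δ := hx.mono' hγδ
    have hyδ : orbitMap f (x 0) ∈ PseudoOrbits (⇑f) δ := orbitMap_mem' f hδpos.le (x 0)
    have hd : dist (Sh x) (Sh (orbitMap f (x 0))) < ε := by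
      apply hwin x (orbitMap f (x 0)) hxδ hyδ
      intro i hi
      have := hWL x hx i hi
      have he : orbitMap f (x 0) i = (f ^ i) (x 0) := rfl
      rw [he]
      linarith
    rw [horb (x 0)] at hd
    exact hd.le
  constructor
  · -- part (a)
    apply Set.Subset.antisymm
    · intro p hp
      rw [Metric.mem_closure_iff]
      intro ε hε
      obtain ⟨γ, hγ, hγδ, hK⟩ := hKUL (ε/2) (by linarith)
      obtain ⟨k, hk, z, hz0, hzk, hz⟩ := hp γ hγ
      have hkz : (0:ℤ) < (k:ℤ) := by exact_mod_cast hk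
      have hwrap : z k = z 0 := by rw [hzk, hz0]
      obtain ⟨hpseudo, hper, hval⟩ := periodize (⇑f) γ k hk z hwrap hz 0
      set x : ℤ → M := fun i => z (((i + 0) % (k:ℤ)).toNat) with hxdef
      have hxδ : x ∈ PseudoOrbits (⇑f) δ := hpseudo.mono' hγδ
      have hx0 : x 0 = p := by
        have h := hval 0 (by norm_num) (by omega)
        have : x 0 = z (((0:ℤ) + 0).toNat) := h
        simpa [hz0] using this
      have hSper : (f ^ (k:ℤ)) (Sh x) = Sh x := by
        rw [← sh_iter' hsi hxδ (k:ℤ), hper]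
      refine ⟨Sh x, ⟨k, hk, ?_⟩, ?_⟩
      · rw [← zpow_natCast f k]
        exact hSper
      · have := hK x hpseudo
        rw [hx0] at this
        rw [dist_comm]
        linarith
    · exact closure_minimal (perPts_subset_chainRecurrent f) (isClosed_chainRecurrent f hf)
  · -- part (b)
    obtain ⟨ρ, hρ0, hρδ, hCB⟩ := chain_back f hf hδpos
    refine ⟨ρ, hρ0, Sh, ?_, ?_, ?_, ?_, ?_⟩
    · -- continuity
      exact hcont.mono (fun x hx => hx.1.mono' hρδ)
    · -- Sh x is nonwandering
      intro x hxp hxΩ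
      have hxδ : x ∈ PseudoOrbits (⇑f) δ := hxp.mono' hρδ
      have hsub : closure (PerPts f) ⊆ NonWandering f :=
        closure_minimal (perPts_subset_nonWandering' f) (isClosed_nonWandering' f)
      apply hsub
      rw [Metric.mem_closure_iff]
      intro ε hε
      obtain ⟨N, η, hη, hwin⟩ := sh_window_cont f hf hcont ε hε
      -- descending chains along the pseudo-orbit
      have hdesc : ∀ k : ℕ, 1 ≤ k → ∀ a : ℤ, ChainFrom (⇑f) δ (x (a + (k:ℤ))) (x a) := by
        intro k hk
        induction k with
        | zero => omega
        | succ n ih =>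
          intro a
          rcases Nat.eq_zero_or_pos n with rfl | hn
          · have := hCB (x a) (x (a + 1)) (hxΩ a) (hxp a)
            simpa using this
          · have c1 : ChainFrom (⇑f) δ (x (a + (n:ℤ) + 1)) (x (a + (n:ℤ))) :=
              hCB (x (a + (n:ℤ))) (x (a + (n:ℤ) + 1)) (hxΩ (a + (n:ℤ))) (hxp (a + (n:ℤ)))
            have c2 := ih hn a
            have e : (a + ((n+1:ℕ):ℤ)) = a + (n:ℤ) + 1 := by push_cast; ring
            rw [e]
            exact c1.trans c2
      have htriv : ChainFrom (⇑f) δ (x (N:ℤ)) (x ((N:ℤ)+1)) :=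
        chainFrom_single ((hxp (N:ℤ)).trans hρδ)
      have hfull : ChainFrom (⇑f) δ (x (N:ℤ)) (x (-(N:ℤ))) := by
        have h2 := hdesc (2*N+1) (by omega) (-(N:ℤ))
        have e : (-(N:ℤ) + ((2*N+1:ℕ):ℤ)) = (N:ℤ)+1 := by push_cast; ring
        rw [e] at h2
        exact htriv.trans h2
      obtain ⟨L, hL, c, hc0, hcL, hcj⟩ := hfull
      set m := 2*N + L with hmdef
      have hm : 1 ≤ m := by omega
      set F : ℕ → M := fun j => if j ≤ 2*N then x (-(N:ℤ) + (j:ℤ)) else c (j - 2*N) with hFdef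
      have hFle : ∀ j : ℕ, j ≤ 2*N → F j = x (-(N:ℤ) + (j:ℤ)) := by
        intro j hj
        simp only [hFdef]
        rw [if_pos hj]
      have hFge : ∀ j : ℕ, 2*N ≤ j → F j = c (j - 2*N) := by
        intro j hj
        rcases eq_or_lt_of_le hj with he | hlt
        · rw [← he]
          rw [hFle (2*N) (le_refl _)]
          rw [show (2*N) - 2*N = 0 from by omega, hc0]
          congr 1
          push_cast
          ring
        · simp only [hFdef]
          rw [if_neg (by omega)]
      have hwrap : F m = F 0 := by
        rw [hFge m (by omega), hFle 0 (by omega)]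
        rw [show m - 2*N = L from by omega, hcL]
        norm_num
      have hjump : ∀ j, j < m → dist (F (j+1)) (f (F j)) ≤ δ := by
        intro j hj
        rcases Nat.lt_or_ge j (2*N) with hj2 | hj2
        · rw [hFle (j+1) (by omega), hFle j (by omega)]
          have e3 : (-(N:ℤ) + ((j+1:ℕ):ℤ)) = (-(N:ℤ) + (j:ℤ)) + 1 := by push_cast; ring
          rw [e3]
          exact (hxp (-(N:ℤ) + (j:ℤ))).trans hρδ
        · rw [hFge (j+1) (by omega), hFge j hj2]
          have e3 : j + 1 - 2*N = (j - 2*N) + 1 := by omega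
          rw [e3]
          exact hcj (j - 2*N) (by omega)
      obtain ⟨hpseudo, hper, hval⟩ := periodize (⇑f) δ m hm F hwrap hjump (N:ℤ)
      set x' : ℤ → M := fun i => F (((i + (N:ℤ)) % (m:ℤ)).toNat) with hx'def
      have hx'δ : x' ∈ PseudoOrbits (⇑f) δ := hpseudo
      have hLz : (1:ℤ) ≤ (L:ℤ) := by exact_mod_cast hL
      have hmz : (m:ℤ) = 2*(N:ℤ) + (L:ℤ) := by push_cast [hmdef]; ring
      have hagree : ∀ i : ℤ, |i| ≤ (N:ℤ) → x' i = x i := by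
        intro i hi
        rw [abs_le] at hi
        have h0 : 0 ≤ i + (N:ℤ) := by omega
        have h1 : i + (N:ℤ) < (m:ℤ) := by omega
        have h := hval i h0 h1
        have h2 : (i + (N:ℤ)).toNat ≤ 2*N := by omega
        have : x' i = F ((i + (N:ℤ)).toNat) := h
        rw [this, hFle _ h2]
        congr 1
        omega
      have hSper : (f ^ m) (Sh x') = Sh x' := by
        have h := sh_iter' hsi hx'δ (m:ℤ)
        rw [hper] at h
        rw [← zpow_natCast f m]
        exact h.symm
      refine ⟨Sh x', ⟨m, hm, hSper⟩, ?_⟩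
      apply hwin x x' hxδ hx'δ
      intro i hi
      rw [hagree i hi, dist_self]
      exact hη
    · -- orbit condition
      intro p _
      exact horb p
    · -- shift invariance
      intro x hxp _
      exact hsi x (hxp.mono' hρδ)
    · -- shadowing condition
      intro ε hε
      refine ⟨ρ, hρ0, le_refl _, ?_⟩
      intro x hxp _ i
      have hxδ : x ∈ PseudoOrbits (⇑f) δ := hxp.mono' hρδ
      rw [sh_iter' hsi hxδ i, dist_self]
      exact hε.le
end

section
/- Suppose there are δ > 0 and a continuous map [·,·] : Δ_δ → M with [p,p] = p for all p ∈ M, which is f-invariant (f([p,q]) = [f(p), f(q)] whenever d(p,q) ≤ δ and d(f(p), f(q)) ≤ δ) and has uniform contraction. Then f is expansive. -/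
open Filter Metric Topology

variable {M : Type*}

/-- Uniform contraction of a bracket on `Δ_δ`. -/
def UniformContraction {M : Type*} [MetricSpace M] (f : Equiv.Perm M) (δ : ℝ)
    (br : M → M → M) : Prop :=
  ∀ ε > (0:ℝ), ∃ m : ℕ, 1 ≤ m ∧ ∀ p q : M, dist p q ≤ δ → ∀ n : ℕ, m ≤ n →
    dist ((f ^ (n : ℤ)) (br p q)) ((f ^ (n : ℤ)) q) < ε ∧
    dist ((f ^ (-(n : ℤ))) (br p q)) ((f ^ (-(n : ℤ))) p) < ε

/-- Proposition 7.3: if `f` admits a continuous bracket on `Δ_δ` with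
`[p,p] = p`, which is `f`-invariant and has uniform contraction, then `f` is expansive. -/
theorem stmt16 {M : Type*} [MetricSpace M] [CompactSpace M]
    (f : Equiv.Perm M) (hf : Continuous (⇑f)) (hf' : Continuous (⇑f.symm))
    (δ : ℝ) (hδ : 0 < δ) (br : M → M → M)
    (hcont : ContinuousOn (fun pq : M × M => br pq.1 pq.2) {pq : M × M | dist pq.1 pq.2 ≤ δ})
    (hdiag : ∀ p : M, br p p = p)
    (hinv : ∀ p q : M, dist p q ≤ δ → dist (f p) (f q) ≤ δ → f (br p q) = br (f p) (f q))
    (hunif : UniformContraction f δ br) :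
    Expansive f := by
  refine ⟨δ, hδ, fun p q hpq => ?_⟩
  by_contra hcon
  push_neg at hcon
  -- hcon : ∀ i, dist ((f ^ i) p) ((f ^ i) q) ≤ δ
  have key : ∀ i : ℤ, (f ^ i) (br p q) = br ((f ^ i) p) ((f ^ i) q) := by
    intro i
    induction i using Int.induction_on with
    | zero => simp
    | succ n ih =>
      have e : ∀ x : M, (f ^ ((n : ℤ) + 1)) x = f ((f ^ (n : ℤ)) x) := by
        intro x
        rw [add_comm, zpow_add, zpow_one, Equiv.Perm.mul_apply]
      rw [e, e, e, ih]
      exact hinv _ _ (hcon n) (by have := hcon ((n : ℤ) + 1); rwa [e, e] at this)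
    | pred n ih =>
      have e : ∀ x : M, f ((f ^ (-(n : ℤ) - 1)) x) = (f ^ (-(n : ℤ))) x := by
        intro x
        rw [← Equiv.Perm.mul_apply, ← zpow_one_add]
        norm_num
      apply f.injective
      rw [e, ih, hinv _ _ (hcon (-(n : ℤ) - 1))
        (by have := hcon (-(n : ℤ)); rwa [← e, ← e] at this), e, e]
  have cancel : ∀ (k : ℤ) (x : M), (f ^ k) ((f ^ (-k)) x) = x := by
    intro k x
    rw [← Equiv.Perm.mul_apply, ← zpow_add, add_neg_cancel, zpow_zero, Equiv.Perm.one_apply]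
  have cancel' : ∀ (k : ℤ) (x : M), (f ^ (-k)) ((f ^ k) x) = x := by
    intro k x
    rw [← Equiv.Perm.mul_apply, ← zpow_add, neg_add_cancel, zpow_zero, Equiv.Perm.one_apply]
  have fw : ∀ ε > (0:ℝ), dist (br p q) q < ε := by
    intro ε hε
    obtain ⟨m, -, hm⟩ := hunif ε hε
    have h1 := (hm ((f ^ (-(m : ℤ))) p) ((f ^ (-(m : ℤ))) q) (hcon _) m le_rfl).1
    rw [← key, cancel, cancel] at h1
    exact h1
  have bw : ∀ ε > (0:ℝ), dist (br p q) p < ε := by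
    intro ε hε
    obtain ⟨m, -, hm⟩ := hunif ε hε
    have h1 := (hm ((f ^ (m : ℤ)) p) ((f ^ (m : ℤ)) q) (hcon _) m le_rfl).2
    rw [← key, cancel', cancel'] at h1
    exact h1
  have hq : br p q = q := by
    have h0 : dist (br p q) q ≤ 0 := by
      by_contra h
      push_neg at h
      exact absurd (fw _ h) (lt_irrefl _)
    exact dist_le_zero.mp h0
  have hp : br p q = p := by
    have h0 : dist (br p q) p ≤ 0 := by
      by_contra h
      push_neg at h
      exact absurd (bw _ h) (lt_irrefl _)
    exact dist_le_zero.mp h0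
  exact hpq (hp.symm.trans hq)
end

section
/- Let A be a set, N ≥ 1 an integer, and T : A → A a surjective function such that every point is eventually N-periodic, i.e., for every a ∈ A there exist integers 0 ≤ i < j ≤ N with T^i(a) = T^j(a). Then every point of A is periodic (for each a ∈ A there is n ≥ 1 with T^n(a) = a) and T is injective. -/
open Filter Metric Topology

variable {M : Type*}

/-- Lemma 8.5: if `T : A → A` is surjective and every point is eventually
`N`-periodic, then every point is periodic and `T` is injective. -/
theorem stmt18 {A : Type*} (N : ℕ) (hN : 1 ≤ N) (T : A → A)
    (hsurj : Function.Surjective T)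
    (h : ∀ a : A, ∃ i j : ℕ, i < j ∧ j ≤ N ∧ T^[i] a = T^[j] a) :
    (∀ a : A, ∃ n : ℕ, 1 ≤ n ∧ T^[n] a = a) ∧ Function.Injective T := by
  have hper : ∀ a : A, ∃ n : ℕ, 1 ≤ n ∧ T^[n] a = a := by
    intro a
    obtain ⟨b, hb⟩ := (hsurj.iterate N) a
    obtain ⟨i, j, hij, hjN, hb2⟩ := h b
    refine ⟨j - i, by omega, ?_⟩
    have key : T^[(j - i) + (N - j) + j] b = T^[(N - j) + j] b := by
      rw [show (j - i) + (N - j) + j = ((j - i) + (N - j)) + j from rfl,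
        Function.iterate_add_apply, Function.iterate_add_apply, ← hb2,
        ← Function.iterate_add_apply, ← Function.iterate_add_apply]
      congr 1
      omega
    have h1 : (j - i) + (N - j) + j = (j - i) + N := by omega
    have h2 : (N - j) + j = N := by omega
    rw [h1, h2, hb] at key
    rwa [Function.iterate_add_apply, hb] at key
  refine ⟨hper, ?_⟩
  have hmul : ∀ (a : A) (n k : ℕ), T^[n] a = a → T^[k * n] a = a := by
    intro a n k hn
    induction k with
    | zero => simp
    | succ k ih => rw [Nat.succ_mul, Function.iterate_add_apply, hn, ih]
  intro x y hxy
  obtain ⟨n, hn1, hnx⟩ := hper x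
  obtain ⟨m, hm1, hmy⟩ := hper y
  have hx := hmul x n m hnx
  have hy := hmul y m n hmy
  obtain ⟨k, hk⟩ : ∃ k, m * n = k + 1 := by
    have : 1 ≤ m * n := Nat.one_le_iff_ne_zero.mpr (by positivity)
    exact ⟨m * n - 1, by omega⟩
  have hy' : T^[m * n] y = y := by rwa [Nat.mul_comm]
  calc x = T^[m * n] x := hx.symm
    _ = T^[k] (T x) := by rw [hk, Function.iterate_succ_apply]
    _ = T^[k] (T y) := by rw [hxy]
    _ = T^[m * n] y := by rw [hk, Function.iterate_succ_apply]
    _ = y := hy'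
end
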